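/- Let δ ∈ (0,1] satisfy (max_{1≤i≤m} γ_i/μ_i - 1)⁺ δ ≤ 1. Then for every x ∈ K₊ and every u ∈ Δ, δ ⟨e,x⟩⁺ ∑_{i=1}^m ψ'(-x_i) (γ_i/μ_i - 1)⁺ u_i - ∑_{i=1}^m ψ'(x_i) (x_i - ⟨e,x⟩⁺ u_i) - ⟨e,x⟩⁺ ∑_{i=1}^m ψ'(x_i) (γ_i/μ_i) u_i ≤ 0, where a⁺ = max(a,0). -/

import Mathlib

/-!
`ψ` is `C¹` with `0 ≤ ψ' ≤ 1` and `ψ' = 1` on `[0, ∞)`. Write `S = ⟨e,x⟩` and `r_i = γ_i/μ_i`;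
then the left-hand side equals
`∑ i, S u_i (δ ψ'(-x_i) (r_i - 1)⁺ + ψ'(x_i) (1 - r_i)) - ∑ i, ψ'(x_i) x_i`.
Each bracket is at most `1` (for `r_i ≤ 1` since `0 ≤ ψ' ≤ 1` and `r_i ≥ 0`, for `r_i ≥ 1` since
`(r_i - 1)⁺ δ ≤ 1`), and `t ≤ ψ'(t) t` for every `t`, so the whole is at most
`S ∑ i, u_i - ∑ i, x_i = 0`.
-/

open scoped BigOperators

noncomputable section

/-- The piecewise function `ψ` from Definition 1 of the paper. -/
def psi (t : ℝ) : ℝ :=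
  if t ≤ -1 then -(1/2)
  else if t ≤ 0 then (t+1)^3 - (1/2)*(t+1)^4 - 1/2
  else t

open Set

theorem hasDerivAt_ite_le {f g f' g' : ℝ → ℝ} {a : ℝ}
    (hf : ∀ x, HasDerivAt f (f' x) x) (hg : ∀ x, HasDerivAt g (g' x) x)
    (hfg : f a = g a) (hfg' : f' a = g' a) (x : ℝ) :
    HasDerivAt (fun t => if t ≤ a then f t else g t) (if x ≤ a then f' x else g' x) x := by
  rcases lt_trichotomy x a with hx | rfl | hx
  · rw [if_pos hx.le]
    refine (hf x).congr_of_eventuallyEq ?_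
    filter_upwards [Iio_mem_nhds hx] with t ht
    rw [if_pos (le_of_lt ht)]
  · rw [if_pos le_rfl]
    have hleft : HasDerivWithinAt (fun t => if t ≤ x then f t else g t) (f' x) (Iic x) x :=
      (hf x).hasDerivWithinAt.congr (fun t ht => if_pos ht) (if_pos le_rfl)
    have hright : HasDerivWithinAt (fun t => if t ≤ x then f t else g t) (f' x) (Ici x) x := by
      rw [hfg']
      refine (hg x).hasDerivWithinAt.congr (fun t ht => ?_) (by rw [if_pos le_rfl, hfg])
      rcases eq_or_lt_of_le (mem_Ici.mp ht) with rfl | ht'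
      · rw [if_pos le_rfl, hfg]
      · rw [if_neg (not_le.mpr ht')]
    simpa only [Iic_union_Ici, hasDerivWithinAt_univ] using hleft.union hright
  · rw [if_neg (not_le.mpr hx)]
    refine (hg x).congr_of_eventuallyEq ?_
    filter_upwards [Ioi_mem_nhds hx] with t ht
    rw [if_neg (not_le.mpr ht)]

def psiCubic (t : ℝ) : ℝ := (t+1)^3 - (1/2)*(t+1)^4 - 1/2

def psiCubicDeriv (t : ℝ) : ℝ := 3*(t+1)^2 - 2*(t+1)^3

theorem hasDerivAt_psiCubic (t : ℝ) : HasDerivAt psiCubic (psiCubicDeriv t) t := by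
  have h : HasDerivAt (fun s : ℝ => s + 1) 1 t := (hasDerivAt_id t).add_const 1
  refine (((h.fun_pow 3).fun_sub ((h.fun_pow 4).const_mul (1/2))).sub_const (1/2)).congr_deriv ?_
  norm_num [psiCubicDeriv]
  ring

def psiDeriv (t : ℝ) : ℝ :=
  if t ≤ -1 then 0 else if t ≤ 0 then psiCubicDeriv t else 1

theorem hasDerivAt_psi (t : ℝ) : HasDerivAt psi (psiDeriv t) t := by
  have hinner (s : ℝ) : HasDerivAt (fun t => if t ≤ 0 then psiCubic t else t)
      (if s ≤ 0 then psiCubicDeriv s else 1) s :=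
    hasDerivAt_ite_le hasDerivAt_psiCubic hasDerivAt_id (by norm_num [psiCubic])
      (by norm_num [psiCubicDeriv]) s
  exact hasDerivAt_ite_le (fun _ => hasDerivAt_const _ _) hinner
    (by norm_num [psiCubic]) (by norm_num [psiCubicDeriv]) t

theorem deriv_psi (t : ℝ) : deriv psi t = psiDeriv t := (hasDerivAt_psi t).deriv

theorem deriv_psi_nonneg (t : ℝ) : 0 ≤ deriv psi t := by
  rw [deriv_psi, psiDeriv, psiCubicDeriv]
  split_ifs
  · norm_num
  · nlinarith [sq_nonneg (t+1)]
  · norm_num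

theorem deriv_psi_le_one (t : ℝ) : deriv psi t ≤ 1 := by
  rw [deriv_psi, psiDeriv, psiCubicDeriv]
  split_ifs
  · norm_num
  · nlinarith [sq_nonneg t, sq_nonneg (t+1)]
  · norm_num

theorem deriv_psi_of_nonneg {t : ℝ} (ht : 0 ≤ t) : deriv psi t = 1 := by
  rw [deriv_psi, psiDeriv, psiCubicDeriv]
  split_ifs <;> nlinarith

theorem le_deriv_psi_mul_self (t : ℝ) : t ≤ deriv psi t * t := by
  rcases le_or_gt 0 t with ht | ht
  · rw [deriv_psi_of_nonneg ht, one_mul]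
  · nlinarith [deriv_psi_le_one t]

theorem mul_max_sub_one_add_mul_one_sub_le_one {p q r δ : ℝ} (hp0 : 0 ≤ p) (hp1 : p ≤ 1)
    (hq1 : q ≤ 1) (hr : 0 ≤ r) (hδ : 0 ≤ δ) (hrδ : max (r - 1) 0 * δ ≤ 1) :
    δ * q * max (r - 1) 0 + p * (1 - r) ≤ 1 := by
  rcases le_total r 1 with hr1 | hr1
  · rw [max_eq_right (sub_nonpos.2 hr1)]
    nlinarith
  · rw [max_eq_left (sub_nonneg.2 hr1)] at hrδ ⊢
    nlinarith [mul_nonneg (mul_nonneg hδ (sub_nonneg.2 hr1)) (sub_nonneg.2 hq1)]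

theorem stmt_4_general (m : ℕ) (μ γ : Fin m → ℝ)
    (hμ : ∀ i, 0 < μ i) (hγ : ∀ i, 0 ≤ γ i)
    (δ : ℝ) (hδ0 : 0 < δ)
    (hδγ : max ((⨆ i, γ i / μ i) - 1) 0 * δ ≤ 1)
    (x : Fin m → ℝ) (hx : 0 < ∑ i, x i)
    (u : Fin m → ℝ) (hu0 : ∀ i, 0 ≤ u i) (hu1 : ∑ i, u i = 1) :
    δ * max (∑ i, x i) 0 * ∑ i, deriv psi (-(x i)) * max (γ i / μ i - 1) 0 * u i
      - ∑ i, deriv psi (x i) * (x i - max (∑ j, x j) 0 * u i)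
      - max (∑ i, x i) 0 * ∑ i, deriv psi (x i) * (γ i / μ i) * u i ≤ 0 := by
  rw [max_eq_left hx.le]
  set S := ∑ j, x j
  have hδi (i : Fin m) : max (γ i / μ i - 1) 0 * δ ≤ 1 :=
    (mul_le_mul_of_nonneg_right (max_le_max_right 0 (sub_le_sub_right
      (le_ciSup (finite_range fun j => γ j / μ j).bddAbove i) 1)) hδ0.le).trans hδγ
  have hcoeff (i : Fin m) : δ * deriv psi (-(x i)) * max (γ i / μ i - 1) 0
      + deriv psi (x i) * (1 - γ i / μ i) ≤ 1 :=
    mul_max_sub_one_add_mul_one_sub_le_one (deriv_psi_nonneg _) (deriv_psi_le_one _)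
      (deriv_psi_le_one _) (div_nonneg (hγ i) (hμ i).le) hδ0.le (hδi i)
  calc _ = ∑ i, (S * u i * (δ * deriv psi (-(x i)) * max (γ i / μ i - 1) 0
          + deriv psi (x i) * (1 - γ i / μ i)) - deriv psi (x i) * x i) := by
        simp only [Finset.mul_sum, ← Finset.sum_sub_distrib]
        exact Finset.sum_congr rfl fun i _ => by ring
    _ ≤ ∑ i, (S * u i - x i) := Finset.sum_le_sum fun i _ => by
        nlinarith [mul_le_mul_of_nonneg_left (hcoeff i) (mul_nonneg hx.le (hu0 i)),
          le_deriv_psi_mul_self (x i)]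
    _ = 0 := by rw [Finset.sum_sub_distrib, ← Finset.mul_sum, hu1, mul_one, sub_self]

/-- If `δ ∈ (0,1]` satisfies `(max_i γ_i/μ_i - 1)⁺ δ ≤ 1`, then for `x ∈ K₊` and
`u ∈ Δ`,
`δ ⟨e,x⟩⁺ ∑ i, ψ'(-x_i)(γ_i/μ_i - 1)⁺ u_i - ∑ i, ψ'(x_i)(x_i - ⟨e,x⟩⁺ u_i)
  - ⟨e,x⟩⁺ ∑ i, ψ'(x_i)(γ_i/μ_i) u_i ≤ 0`. -/
theorem stmt_4 (m : ℕ) (hm : 1 ≤ m) (μ γ : Fin m → ℝ)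
    (hμ : ∀ i, 0 < μ i) (hγ : ∀ i, 0 ≤ γ i)
    (δ : ℝ) (hδ0 : 0 < δ) (hδ1 : δ ≤ 1)
    (hδγ : max ((⨆ i, γ i / μ i) - 1) 0 * δ ≤ 1)
    (x : Fin m → ℝ) (hx : 0 < ∑ i, x i)
    (u : Fin m → ℝ) (hu0 : ∀ i, 0 ≤ u i) (hu1 : ∑ i, u i = 1) :
    δ * max (∑ i, x i) 0 * ∑ i, deriv psi (-(x i)) * max (γ i / μ i - 1) 0 * u i
      - ∑ i, deriv psi (x i) * (x i - max (∑ j, x j) 0 * u i)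
      - max (∑ i, x i) 0 * ∑ i, deriv psi (x i) * (γ i / μ i) * u i ≤ 0 :=
  stmt_4_general m μ γ hμ hγ δ hδ0 hδγ x hx u hu0 hu1

end
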